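/- arXiv:1303.0160 — 7 statements merged into one kernel-verified Lean document; each statement's English description precedes it below -/
import Mathlib

section
/- Let G = {(x,y) ∈ {0,1}^m × {0,1}^n : f(x,y) ≤ A(Q,c,d)} be the set of solutions with objective value at most the average. Then |G| ≥ 2^{m+n-2} (assuming m, n ≥ 1). -/
/-!
`f` is affine in `x` and in `y` separately, so replacing `x` by its complement `1 - x` and
`y` by `1 - y` and summing the four values gives `4 f(½, ½)`.  Averaging the same identity over
the cube shows `A = f(½, ½)`, so every orbit `{x, xᶜ} × {y, yᶜ}` contains a point with
`f ≤ A`.  Normalising `x 0 = y 0 = false` picks one point from each of these `2^(m+n-2)`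
disjoint orbits, and choosing a good point in each orbit is injective.
-/

open Finset

/-- The bipartite boolean quadratic objective f(x,y) = xᵀQy + c·x + d·y,
extended to real vectors. -/
noncomputable def fobj (m n : ℕ) (Q : Fin m → Fin n → ℝ) (c : Fin m → ℝ) (d : Fin n → ℝ)
    (x : Fin m → ℝ) (y : Fin n → ℝ) : ℝ :=
  (∑ i, ∑ j, Q i j * x i * y j) + (∑ i, c i * x i) + (∑ j, d j * y j)

/-- A boolean vector viewed as a real 0-1 vector. -/
def bv {k : ℕ} (x : Fin k → Bool) : Fin k → ℝ := fun i => if x i then 1 else 0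

/-- The average of f over all 2^(m+n) boolean pairs (x,y). -/
noncomputable def avgA (m n : ℕ) (Q : Fin m → Fin n → ℝ) (c : Fin m → ℝ) (d : Fin n → ℝ) : ℝ :=
  (∑ x : Fin m → Bool, ∑ y : Fin n → Bool, fobj m n Q c d (bv x) (bv y)) / 2 ^ (m + n)

theorem fobj_add_fobj_one_sub {m n : ℕ} (Q : Fin m → Fin n → ℝ) (c : Fin m → ℝ) (d : Fin n → ℝ)
    (x : Fin m → ℝ) (y : Fin n → ℝ) :
    fobj m n Q c d x y + fobj m n Q c d (1 - x) y + fobj m n Q c d x (1 - y)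
      + fobj m n Q c d (1 - x) (1 - y)
      = 4 * fobj m n Q c d (fun _ => 1 / 2) (fun _ => 1 / 2) := by
  have hQ : ∑ i, ∑ j, Q i j * x i * y j + ∑ i, ∑ j, Q i j * (1 - x i) * y j
      + ∑ i, ∑ j, Q i j * x i * (1 - y j) + ∑ i, ∑ j, Q i j * (1 - x i) * (1 - y j)
      = 4 * ∑ i, ∑ j, Q i j * (1 / 2) * (1 / 2) := by
    simp only [mul_sum, ← sum_add_distrib]
    exact sum_congr rfl fun i _ => sum_congr rfl fun j _ => by ring
  have hc : ∑ i, c i * x i + ∑ i, c i * (1 - x i) = 2 * ∑ i, c i * (1 / 2) := by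
    simp only [mul_sum, ← sum_add_distrib]
    exact sum_congr rfl fun i _ => by ring
  have hd : ∑ j, d j * y j + ∑ j, d j * (1 - y j) = 2 * ∑ j, d j * (1 / 2) := by
    simp only [mul_sum, ← sum_add_distrib]
    exact sum_congr rfl fun j _ => by ring
  simp only [fobj, Pi.sub_apply, Pi.one_apply]
  linarith

theorem bv_compl {k : ℕ} (x : Fin k → Bool) : bv xᶜ = 1 - bv x := by
  funext i
  by_cases h : x i <;> simp [bv, h]

theorem avgA_eq_fobj_half (m n : ℕ) (Q : Fin m → Fin n → ℝ) (c : Fin m → ℝ) (d : Fin n → ℝ) :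
    avgA m n Q c d = fobj m n Q c d (fun _ => 1 / 2) (fun _ => 1 / 2) := by
  set F := fun (x : Fin m → Bool) (y : Fin n → Bool) => fobj m n Q c d (bv x) (bv y)
  have hcompl {k : ℕ} (g : (Fin k → Bool) → ℝ) : ∑ x, g xᶜ = ∑ x, g x :=
    compl_involutive.bijective.sum_comp g
  have hsum : 4 * ∑ x, ∑ y, F x y = ∑ x, ∑ y, (F x y + F xᶜ y + F x yᶜ + F xᶜ yᶜ) := by
    have hx : ∑ x, ∑ y, F xᶜ y = ∑ x, ∑ y, F x y := hcompl fun x => ∑ y, F x y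
    simp only [sum_add_distrib, hcompl (F _), hx]
    ring
  simp only [F, bv_compl, fobj_add_fobj_one_sub, sum_const, card_univ, Fintype.card_fun,
    Fintype.card_bool, Fintype.card_fin, nsmul_eq_mul] at hsum
  rw [avgA, div_eq_iff (by positivity), pow_add]
  push_cast at hsum
  linarith

def complIf {α : Type*} [BooleanAlgebra α] (a : Bool) (x : α) : α := if a then xᶜ else x

theorem complIf_complIf {α : Type*} [BooleanAlgebra α] (a : Bool) (x : α) :
    complIf a (complIf a x) = x := by
  cases a <;> simp [complIf]

theorem complIf_cons_false_inj {k : ℕ} {a b : Bool} {u v : Fin k → Bool} :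
    complIf a (Fin.cons false u : Fin (k + 1) → Bool) = complIf b (Fin.cons false v) ↔
      a = b ∧ u = v := by
  refine ⟨fun h => ?_, by rintro ⟨rfl, rfl⟩; rfl⟩
  have hzero (e : Bool) (w : Fin k → Bool) :
      complIf e (Fin.cons false w : Fin (k + 1) → Bool) 0 = e := by
    cases e <;> rfl
  obtain rfl : a = b := by rw [← hzero a u, h, hzero]
  have := congrArg (complIf a) h
  rw [complIf_complIf, complIf_complIf] at this
  exact ⟨rfl, Fin.cons_right_injective _ this⟩

theorem exists_complIf_le_avgA {m n : ℕ} (Q : Fin m → Fin n → ℝ) (c : Fin m → ℝ)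
    (d : Fin n → ℝ) (x : Fin m → Bool) (y : Fin n → Bool) :
    ∃ a b : Bool, fobj m n Q c d (bv (complIf a x)) (bv (complIf b y)) ≤ avgA m n Q c d := by
  have h4 := fobj_add_fobj_one_sub Q c d (bv x) (bv y)
  rw [← bv_compl, ← bv_compl, ← avgA_eq_fobj_half] at h4
  obtain ⟨⟨a, b⟩, -, h⟩ := exists_le_of_sum_le (s := univ) univ_nonempty
    (f := fun p : Bool × Bool => fobj m n Q c d (bv (complIf p.1 x)) (bv (complIf p.2 y)))
    (g := fun _ => avgA m n Q c d) (by simp [Fintype.sum_prod_type, complIf]; linarith)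
  exact ⟨a, b, h⟩

theorem no_worse_than_average_count (m n : ℕ) (hm : 1 ≤ m) (hn : 1 ≤ n)
    (Q : Fin m → Fin n → ℝ) (c : Fin m → ℝ) (d : Fin n → ℝ) :
    2 ^ (m + n - 2) ≤
      ((Finset.univ : Finset ((Fin m → Bool) × (Fin n → Bool))).filter
        (fun p => fobj m n Q c d (bv p.1) (bv p.2) ≤ avgA m n Q c d)).card := by
  obtain ⟨m, rfl⟩ := Nat.exists_eq_add_of_le' hm
  obtain ⟨n, rfl⟩ := Nat.exists_eq_add_of_le' hn
  choose a b hab using fun (u : Fin m → Bool) (v : Fin n → Bool) =>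
    exists_complIf_le_avgA Q c d (Fin.cons false u) (Fin.cons false v)
  have hcard :
      2 ^ (m + 1 + (n + 1) - 2) = (univ : Finset ((Fin m → Bool) × (Fin n → Bool))).card := by
    rw [show m + 1 + (n + 1) - 2 = m + n by omega]
    simp [pow_add]
  rw [hcard]
  refine card_le_card_of_injOn (fun p => (complIf (a p.1 p.2) (Fin.cons false p.1),
    complIf (b p.1 p.2) (Fin.cons false p.2))) (fun p _ => by simpa using hab p.1 p.2) ?_
  rintro p - q - h
  simp only [Prod.mk.injEq, complIf_cons_false_inj] at h
  exact Prod.ext h.1.2 h.2.2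
end

section
/- The bound |G| ≥ 2^{m+n-2} is tight: for m, n ≥ 1, take Q with q_{mn} = -1 and all other entries 0, and c = 0, d = 0. Then A(Q,0,0) = -1/4 and the set G = {(x,y) ∈ {0,1}^m × {0,1}^n : f(x,y) ≤ A(Q,0,0)} equals {(x,y) : x_m = 1 and y_n = 1}, so |G| = 2^{m+n-2}. -/
/-! With a single nonzero entry `q i₀ j₀ = a` the objective is `a * x i₀ * y j₀`. The product
`x i₀ * y j₀` equals `1` on exactly a quarter of the boolean pairs, so the average is `a / 4`;
for `a < 0` the value `a` lies below it and the value `0` above it, so the sublevel set is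
`{x i₀ = y j₀ = 1}`, a product of two half-cubes. -/

open Finset

lemma Fintype.card_filter_apply_eq {ι κ : Type*} [Fintype ι] [DecidableEq ι] [Fintype κ]
    [DecidableEq κ] (i : ι) (a : κ) :
    #{f : ι → κ | f i = a} = Fintype.card κ ^ (Fintype.card ι - 1) := by
  simpa [Fintype.piFinset_univ] using
    Fintype.card_filter_piFinset_const_eq_of_mem (univ : Finset κ) i (mem_univ a)

lemma sum_bv_apply {k : ℕ} (i : Fin k) : ∑ x : Fin k → Bool, bv x i = 2 ^ (k - 1) := by
  simp [bv, sum_boole, Fintype.card_filter_apply_eq]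

section SingleEntry

variable {m n : ℕ} (i₀ : Fin m) (j₀ : Fin n) (a : ℝ)

lemma fobj_single (x : Fin m → ℝ) (y : Fin n → ℝ) :
    fobj m n (fun i j => if i = i₀ ∧ j = j₀ then a else 0) (fun _ => 0) (fun _ => 0) x y
      = a * x i₀ * y j₀ := by
  simp [fobj, ite_and]

lemma avgA_single :
    avgA m n (fun i j => if i = i₀ ∧ j = j₀ then a else 0) (fun _ => 0) (fun _ => 0) = a / 4 := by
  have hsum : ∑ x : Fin m → Bool, ∑ y : Fin n → Bool, a * bv x i₀ * bv y j₀
      = a * ((∑ x : Fin m → Bool, bv x i₀) * ∑ y : Fin n → Bool, bv y j₀) := by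
    rw [sum_mul_sum, mul_sum]
    simp only [mul_sum, mul_assoc]
  simp only [avgA, fobj_single, hsum, sum_bv_apply]
  obtain ⟨m, rfl⟩ := Nat.exists_eq_add_one_of_ne_zero i₀.pos.ne'
  obtain ⟨n, rfl⟩ := Nat.exists_eq_add_one_of_ne_zero j₀.pos.ne'
  simp only [Nat.add_sub_cancel]
  field_simp
  ring

lemma mul_bv_mul_bv_le_div_four_iff {a : ℝ} (ha : a < 0) (x : Fin m → Bool) (y : Fin n → Bool) :
    a * bv x i₀ * bv y j₀ ≤ a / 4 ↔ x i₀ = true ∧ y j₀ = true := by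
  unfold bv
  split_ifs <;> simp [*] <;> linarith

lemma filter_fobj_single_le_avgA {a : ℝ} (ha : a < 0) :
    (univ.filter fun p : (Fin m → Bool) × (Fin n → Bool) =>
        fobj m n (fun i j => if i = i₀ ∧ j = j₀ then a else 0) (fun _ => 0) (fun _ => 0)
            (bv p.1) (bv p.2)
          ≤ avgA m n (fun i j => if i = i₀ ∧ j = j₀ then a else 0) (fun _ => 0) (fun _ => 0))
      = univ.filter fun p => p.1 i₀ = true ∧ p.2 j₀ = true :=
  filter_congr fun p _ => by
    rw [fobj_single, avgA_single, mul_bv_mul_bv_le_div_four_iff _ _ ha]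

end SingleEntry

lemma card_filter_apply_and_apply {m n : ℕ} (i₀ : Fin m) (j₀ : Fin n) :
    #(univ.filter fun p : (Fin m → Bool) × (Fin n → Bool) => p.1 i₀ = true ∧ p.2 j₀ = true)
      = 2 ^ (m + n - 2) := by
  rw [← univ_product_univ,
    filter_product (fun x : Fin m → Bool => x i₀ = true) (fun y : Fin n → Bool => y j₀ = true),
    card_product, Fintype.card_filter_apply_eq, Fintype.card_filter_apply_eq, ← pow_add]
  simp only [Fintype.card_bool, Fintype.card_fin]
  have := i₀.pos
  have := j₀.pos
  congr 1
  omega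

theorem dominance_bound_tight (m n : ℕ) (hm : 0 < m) (hn : 0 < n)
    (Q : Fin m → Fin n → ℝ)
    (hQ : Q = fun i j => if i.val = m - 1 ∧ j.val = n - 1 then (-1 : ℝ) else 0) :
    avgA m n Q (fun _ => 0) (fun _ => 0) = -1 / 4
    ∧
    ((Finset.univ : Finset ((Fin m → Bool) × (Fin n → Bool))).filter
        (fun p => fobj m n Q (fun _ => 0) (fun _ => 0) (bv p.1) (bv p.2)
          ≤ avgA m n Q (fun _ => 0) (fun _ => 0)))
      = ((Finset.univ : Finset ((Fin m → Bool) × (Fin n → Bool))).filter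
        (fun p => p.1 ⟨m - 1, by omega⟩ = true ∧ p.2 ⟨n - 1, by omega⟩ = true))
    ∧
    ((Finset.univ : Finset ((Fin m → Bool) × (Fin n → Bool))).filter
        (fun p => fobj m n Q (fun _ => 0) (fun _ => 0) (bv p.1) (bv p.2)
          ≤ avgA m n Q (fun _ => 0) (fun _ => 0))).card = 2 ^ (m + n - 2) := by
  have hQ_single : Q = fun i j => if i = ⟨m - 1, by omega⟩ ∧ j = ⟨n - 1, by omega⟩ then -1 else 0 := by
    simp only [hQ, Fin.ext_iff]
  subst hQ_single
  have hG := filter_fobj_single_le_avgA (⟨m - 1, by omega⟩ : Fin m) (⟨n - 1, by omega⟩ : Fin n)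
    neg_one_lt_zero
  refine ⟨avgA_single _ _ _, hG, ?_⟩
  rw [hG, card_filter_apply_and_apply]
end

section
/- Let x ∈ [0,1]^m and y ∈ [0,1]^n be arbitrary fractional vectors, and extend f(x,y) = Σ_{i,j} q_{ij} x_i y_j + Σ_i c_i x_i + Σ_j d_j y_j. Define y* ∈ {0,1}^n by y*_j = 1 if d_j + Σ_i q_{ij} x_i > 0 and y*_j = 0 otherwise, and then x* ∈ {0,1}^m by x*_i = 1 if c_i + Σ_j q_{ij} y*_j > 0 and x*_i = 0 otherwise. Then f(x*, y*) ≥ f(x, y). -/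
open Finset

/-!
For fixed `x`, `f(x, ·)` is affine with coefficients `d_j + Σ_i q_ij x_i`, so over the box it is
maximised by the 0-1 vector that switches on exactly the positive coefficients; this is `y*`.
Symmetrically, `x*` maximises the affine function `f(·, y*)`. Chaining the two inequalities gives
`f(x, y) ≤ f(x, y*) ≤ f(x*, y*)`.
-/

theorem mul_le_mul_ite_of_iff_pos {a t : ℝ} (ht : t ∈ Set.Icc (0 : ℝ) 1) {b : Bool}
    (hb : b = true ↔ 0 < a) : a * t ≤ a * (if b then 1 else 0) := by
  obtain ⟨ht0, ht1⟩ := ht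
  cases b with
  | true => simpa using mul_le_mul_of_nonneg_left ht1 (hb.mp rfl).le
  | false =>
    have ha : a ≤ 0 := not_lt.mp fun h => absurd (hb.mpr h) Bool.false_ne_true
    simpa using mul_nonpos_of_nonpos_of_nonneg ha ht0

theorem sum_mul_le_sum_mul_bv {k : ℕ} (a t : Fin k → ℝ) (ht : ∀ j, t j ∈ Set.Icc (0 : ℝ) 1)
    {b : Fin k → Bool} (hb : ∀ j, b j = true ↔ 0 < a j) :
    ∑ j, a j * t j ≤ ∑ j, a j * bv b j :=
  sum_le_sum fun j _ => mul_le_mul_ite_of_iff_pos (ht j) (hb j)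

section fobj

variable {m n : ℕ} (Q : Fin m → Fin n → ℝ) (c : Fin m → ℝ) (d : Fin n → ℝ)

theorem fobj_eq_add_sum_mul_snd (x : Fin m → ℝ) (y : Fin n → ℝ) :
    fobj m n Q c d x y = (∑ i, c i * x i) + ∑ j, (d j + ∑ i, Q i j * x i) * y j := by
  rw [fobj, sum_comm]
  simp only [add_mul, sum_add_distrib, sum_mul]
  ring

theorem fobj_eq_add_sum_mul_fst (x : Fin m → ℝ) (y : Fin n → ℝ) :
    fobj m n Q c d x y = (∑ j, d j * y j) + ∑ i, (c i + ∑ j, Q i j * y j) * x i := by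
  have hQ : ∑ i, ∑ j, Q i j * x i * y j = ∑ i, ∑ j, Q i j * y j * x i :=
    sum_congr rfl fun i _ => sum_congr rfl fun j _ => mul_right_comm _ _ _
  rw [fobj, hQ]
  simp only [add_mul, sum_add_distrib, sum_mul]
  ring

theorem fobj_le_fobj_bv_snd (x : Fin m → ℝ) {y : Fin n → ℝ} (hy : ∀ j, y j ∈ Set.Icc (0 : ℝ) 1)
    {ystar : Fin n → Bool} (hys : ∀ j, ystar j = true ↔ 0 < d j + ∑ i, Q i j * x i) :
    fobj m n Q c d x y ≤ fobj m n Q c d x (bv ystar) := by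
  rw [fobj_eq_add_sum_mul_snd, fobj_eq_add_sum_mul_snd]
  exact add_le_add_right (sum_mul_le_sum_mul_bv _ y hy hys) _

theorem fobj_le_fobj_bv_fst {x : Fin m → ℝ} (y : Fin n → ℝ) (hx : ∀ i, x i ∈ Set.Icc (0 : ℝ) 1)
    {xstar : Fin m → Bool} (hxs : ∀ i, xstar i = true ↔ 0 < c i + ∑ j, Q i j * y j) :
    fobj m n Q c d x y ≤ fobj m n Q c d (bv xstar) y := by
  rw [fobj_eq_add_sum_mul_fst, fobj_eq_add_sum_mul_fst]
  exact add_le_add_right (sum_mul_le_sum_mul_bv _ x hx hxs) _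

end fobj

theorem RyOx_rounding (m n : ℕ)
    (Q : Fin m → Fin n → ℝ) (c : Fin m → ℝ) (d : Fin n → ℝ)
    (x : Fin m → ℝ) (y : Fin n → ℝ)
    (hx : ∀ i, x i ∈ Set.Icc (0 : ℝ) 1) (hy : ∀ j, y j ∈ Set.Icc (0 : ℝ) 1)
    (ystar : Fin n → Bool)
    (hys : ∀ j, ystar j = true ↔ 0 < d j + ∑ i, Q i j * x i)
    (xstar : Fin m → Bool)
    (hxs : ∀ i, xstar i = true ↔ 0 < c i + ∑ j, Q i j * bv ystar j) :
    fobj m n Q c d x y ≤ fobj m n Q c d (bv xstar) (bv ystar) :=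
  (fobj_le_fobj_bv_snd Q c d x hy hys).trans (fobj_le_fobj_bv_fst Q c d (bv ystar) hx hxs)
end

section
/- The average objective value over all (2^m - 1)(2^n - 1) nontrivial solutions (i.e., pairs (x,y) with x ≠ 0 and y ≠ 0) equals (2^{m-1}·2^{n-1} / ((2^m - 1)(2^n - 1))) · (Σ_{i,j} q_{ij} + ((2^n - 1)/2^{n-1})·Σ_i c_i + ((2^m - 1)/2^{m-1})·Σ_j d_j). -/
open Finset

lemma sum_bv (k : ℕ) (i : Fin k) : ∑ x : Fin k → Bool, bv x i = 2 ^ (k - 1) := by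
  rw [← Equiv.sum_comp (Equiv.piSplitAt i (fun _ => Bool)).symm (fun x => bv x i)]
  have h : ∀ p : Bool × ({j : Fin k // j ≠ i} → Bool),
      bv ((Equiv.piSplitAt i (fun _ => Bool)).symm p) i = if p.1 then 1 else 0 := by
    intro p; simp [bv, Equiv.piSplitAt_symm_apply]
  rw [Fintype.sum_prod_type]
  simp only [h]
  rw [Fintype.sum_bool]
  simp

theorem average_over_nontrivial (m n : ℕ) (hm : 1 ≤ m) (hn : 1 ≤ n)
    (Q : Fin m → Fin n → ℝ) (c : Fin m → ℝ) (d : Fin n → ℝ) :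
    (∑ p ∈ (Finset.univ : Finset ((Fin m → Bool) × (Fin n → Bool))).filter
        (fun p => p.1 ≠ (fun _ => false) ∧ p.2 ≠ (fun _ => false)),
        fobj m n Q c d (bv p.1) (bv p.2))
      / (((2 : ℝ) ^ m - 1) * ((2 : ℝ) ^ n - 1))
    = (2 : ℝ) ^ (m - 1) * (2 : ℝ) ^ (n - 1) / (((2 : ℝ) ^ m - 1) * ((2 : ℝ) ^ n - 1)) *
        ((∑ i, ∑ j, Q i j)
          + (((2 : ℝ) ^ n - 1) / (2 : ℝ) ^ (n - 1)) * (∑ i, c i)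
          + (((2 : ℝ) ^ m - 1) / (2 : ℝ) ^ (m - 1)) * (∑ j, d j)) := by
  have hA : ((2:ℝ) ^ (m-1)) ≠ 0 := by positivity
  have hB : ((2:ℝ) ^ (n-1)) ≠ 0 := by positivity
  have hfilter : (Finset.univ : Finset ((Fin m → Bool) × (Fin n → Bool))).filter
        (fun p => p.1 ≠ (fun _ => false) ∧ p.2 ≠ (fun _ => false))
      = (Finset.univ.erase (fun _ => false)) ×ˢ (Finset.univ.erase (fun _ => false)) := by
    ext p
    simp [Finset.mem_erase, Finset.mem_product, and_comm]
  rw [hfilter, Finset.sum_product]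
  have hbv0 : ∀ k : ℕ, bv (fun _ : Fin k => false) = fun _ => 0 := by
    intro k; funext i; simp [bv]
  have hcsum : ∑ x : Fin m → Bool, ∑ i, c i * bv x i = 2 ^ (m-1) * ∑ i, c i := by
    rw [Finset.sum_comm]
    have h1 : ∀ i, ∑ x : Fin m → Bool, c i * bv x i = c i * 2 ^ (m-1) := fun i => by
      rw [← Finset.mul_sum, sum_bv]
    simp only [h1, ← Finset.sum_mul]
    ring
  have hdsum : ∑ y : Fin n → Bool, ∑ j, d j * bv y j = 2 ^ (n-1) * ∑ j, d j := by
    rw [Finset.sum_comm]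
    have h1 : ∀ j, ∑ y : Fin n → Bool, d j * bv y j = d j * 2 ^ (n-1) := fun j => by
      rw [← Finset.mul_sum, sum_bv]
    simp only [h1, ← Finset.sum_mul]
    ring
  have hzero_y : ∀ x, fobj m n Q c d (bv x) (bv (fun _ => false)) = ∑ i, c i * bv x i := by
    intro x; simp [fobj, hbv0]
  have hzero_x : ∑ y : Fin n → Bool, fobj m n Q c d (bv (fun _ => false)) (bv y)
      = 2 ^ (n-1) * ∑ j, d j := by
    rw [← hdsum]
    refine Finset.sum_congr rfl fun y _ => ?_
    simp [fobj, hbv0]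
  have hczero : ∑ i, c i * bv (fun _ : Fin m => false) i = 0 := by simp [hbv0]
  have herase : ∀ x, ∑ y ∈ Finset.univ.erase (fun _ => false), fobj m n Q c d (bv x) (bv y)
      = (∑ y : Fin n → Bool, fobj m n Q c d (bv x) (bv y)) - ∑ i, c i * bv x i := by
    intro x
    rw [Finset.sum_erase_eq_sub (Finset.mem_univ _), hzero_y]
  simp only [herase, Finset.sum_sub_distrib]
  rw [Finset.sum_erase_eq_sub (Finset.mem_univ (fun _ : Fin m => false)),
      Finset.sum_erase_eq_sub (Finset.mem_univ (fun _ : Fin m => false)),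
      hzero_x, hczero, hcsum]
  have hq : ∑ x : Fin m → Bool, ∑ y : Fin n → Bool, (∑ i, ∑ j, Q i j * bv x i * bv y j)
      = 2 ^ (m-1) * 2 ^ (n-1) * (∑ i, ∑ j, Q i j) := by
    have h1 : ∀ x : Fin m → Bool, ∑ y : Fin n → Bool, ∑ i, ∑ j, Q i j * bv x i * bv y j
        = ∑ i, (∑ j, Q i j * 2 ^ (n-1)) * bv x i := by
      intro x
      rw [Finset.sum_comm]
      refine Finset.sum_congr rfl fun i _ => ?_
      rw [Finset.sum_comm, Finset.sum_mul]
      refine Finset.sum_congr rfl fun j _ => ?_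
      rw [← Finset.mul_sum, sum_bv]
      ring
    simp only [h1]
    rw [Finset.sum_comm]
    have h2 : ∀ i, ∑ x : Fin m → Bool, (∑ j, Q i j * 2 ^ (n-1)) * bv x i
        = (∑ j, Q i j * 2 ^ (n-1)) * 2 ^ (m-1) := fun i => by
      rw [← Finset.mul_sum, sum_bv]
    simp only [h2]
    simp only [Finset.sum_mul, Finset.mul_sum]
    refine Finset.sum_congr rfl fun i _ => Finset.sum_congr rfl fun j _ => by ring
  have hfull : ∑ x : Fin m → Bool, ∑ y : Fin n → Bool, fobj m n Q c d (bv x) (bv y)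
      = 2 ^ (m-1) * 2 ^ (n-1) * (∑ i, ∑ j, Q i j)
        + 2 ^ n * (2 ^ (m-1) * ∑ i, c i) + 2 ^ m * (2 ^ (n-1) * ∑ j, d j) := by
    have h3 : ∀ x : Fin m → Bool, ∑ _y : Fin n → Bool, (∑ i, c i * bv x i)
        = 2 ^ n * ∑ i, c i * bv x i := by
      intro x
      rw [Finset.sum_const, Finset.card_univ]
      simp [nsmul_eq_mul]
    have h4 : ∑ _x : Fin m → Bool, (∑ y : Fin n → Bool, ∑ j, d j * bv y j)
        = 2 ^ m * (2 ^ (n-1) * ∑ j, d j) := by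
      rw [Finset.sum_const, Finset.card_univ, hdsum]
      simp [nsmul_eq_mul]
    simp only [fobj, Finset.sum_add_distrib, hq, h3, h4, ← Finset.mul_sum, hcsum]
  rw [hfull]
  have h2m : (2:ℝ) ^ m = 2 * 2 ^ (m-1) := by
    rw [← pow_succ']; congr 1; omega
  have h2n : (2:ℝ) ^ n = 2 * 2 ^ (n-1) := by
    rw [← pow_succ']; congr 1; omega
  rw [div_mul_eq_mul_div]
  congr 1
  field_simp
  rw [h2m, h2n]
  ring
end

section
/- Let x ∈ [0,1]^m and y ∈ [0,1]^n. Define x⁰ ∈ {0,1}^m by x⁰_i = 1 iff c_i + Σ_j q_{ij} y_j > 0, and y⁰ ∈ {0,1}^n by y⁰_j = 1 iff d_j + Σ_i q_{ij} x⁰_i > 0. Then f(x⁰, y⁰) ≥ f(x, y), where f is the bilinear objective extended to the box. -/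
open Finset

/-! For fixed `y`, `f` is affine in `x` with slope `c i + ∑ j, Q i j * y j` in coordinate `i`,
and symmetrically in `y`. An affine function on the unit box is maximized at the vertex that
sets exactly the coordinates of positive slope to `1`, so rounding `x` against `y` and then `y`
against the rounded `x` never decreases `f`. -/

lemma mul_le_ite_mul {z t : ℝ} (hz : z ∈ Set.Icc (0 : ℝ) 1) {b : Bool}
    (hb : b = true ↔ 0 < t) : z * t ≤ (if b then (1 : ℝ) else 0) * t := by
  cases b with
  | true =>
    have ht : 0 < t := hb.mp rfl
    simpa using mul_le_of_le_one_left ht.le hz.2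
  | false =>
    have ht : t ≤ 0 := not_lt.mp fun h => Bool.false_ne_true (hb.mpr h)
    simpa using mul_nonpos_of_nonneg_of_nonpos hz.1 ht

lemma sum_mul_le_sum_bv_mul {k : ℕ} {z : Fin k → ℝ} (hz : ∀ i, z i ∈ Set.Icc (0 : ℝ) 1)
    {g : Fin k → ℝ} {b : Fin k → Bool} (hb : ∀ i, b i = true ↔ 0 < g i) :
    ∑ i, z i * g i ≤ ∑ i, bv b i * g i :=
  sum_le_sum fun i _ => mul_le_ite_mul (hz i) (hb i)

section

variable {m n : ℕ} (Q : Fin m → Fin n → ℝ) (c : Fin m → ℝ) (d : Fin n → ℝ)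

lemma fobj_eq_sum_mul_left (x : Fin m → ℝ) (y : Fin n → ℝ) :
    fobj m n Q c d x y = ∑ i, x i * (c i + ∑ j, Q i j * y j) + ∑ j, d j * y j := by
  simp only [fobj, mul_add, mul_sum, sum_add_distrib, mul_comm, mul_left_comm, add_comm,
    add_left_comm]

lemma fobj_eq_sum_mul_right (x : Fin m → ℝ) (y : Fin n → ℝ) :
    fobj m n Q c d x y = ∑ j, y j * (d j + ∑ i, Q i j * x i) + ∑ i, c i * x i := by
  rw [fobj, sum_comm]
  simp only [mul_add, mul_sum, sum_add_distrib, mul_comm, mul_left_comm, add_comm,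
    add_left_comm]

lemma fobj_le_fobj_bv_left {x : Fin m → ℝ} (hx : ∀ i, x i ∈ Set.Icc (0 : ℝ) 1)
    (y : Fin n → ℝ) {b : Fin m → Bool} (hb : ∀ i, b i = true ↔ 0 < c i + ∑ j, Q i j * y j) :
    fobj m n Q c d x y ≤ fobj m n Q c d (bv b) y := by
  rw [fobj_eq_sum_mul_left, fobj_eq_sum_mul_left]
  exact add_le_add_left (sum_mul_le_sum_bv_mul hx hb) _

lemma fobj_le_fobj_bv_right (x : Fin m → ℝ) {y : Fin n → ℝ}
    (hy : ∀ j, y j ∈ Set.Icc (0 : ℝ) 1) {b : Fin n → Bool}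
    (hb : ∀ j, b j = true ↔ 0 < d j + ∑ i, Q i j * x i) :
    fobj m n Q c d x y ≤ fobj m n Q c d x (bv b) := by
  rw [fobj_eq_sum_mul_right, fobj_eq_sum_mul_right]
  exact add_le_add_left (sum_mul_le_sum_bv_mul hy hb) _

end

theorem RxOy_rounding (m n : ℕ)
    (Q : Fin m → Fin n → ℝ) (c : Fin m → ℝ) (d : Fin n → ℝ)
    (x : Fin m → ℝ) (y : Fin n → ℝ)
    (hx : ∀ i, x i ∈ Set.Icc (0 : ℝ) 1) (hy : ∀ j, y j ∈ Set.Icc (0 : ℝ) 1)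
    (xzero : Fin m → Bool)
    (hxz : ∀ i, xzero i = true ↔ 0 < c i + ∑ j, Q i j * y j)
    (yzero : Fin n → Bool)
    (hyz : ∀ j, yzero j = true ↔ 0 < d j + ∑ i, Q i j * bv xzero i) :
    fobj m n Q c d x y ≤ fobj m n Q c d (bv xzero) (bv yzero) :=
  (fobj_le_fobj_bv_left Q c d hx y hxz).trans (fobj_le_fobj_bv_right Q c d _ hy hyz)
end

section
/- For positive integers a₁,…,a_n, a subset partition S, N∖S with Σ_{j∈S} a_j = Σ_{j∈N∖S} a_j exists if and only if the median of the multiset {Σ_{j∈H} a_j : H ⊆ N} (with 2^n elements, both median values) equals (1/2)·Σ_{j∈N} a_j. Here the key fact is: for every H ⊆ N, either Σ_{j∈H} a_j ≤ (1/2)Σ_{j∈N} a_j ≤ Σ_{j∈N∖H} a_j or the reverse inequalities hold, and Σ_{j∈H} a_j + Σ_{j∈N∖H} a_j = Σ_{j∈N} a_j. -/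
/-!
Write `g H = ∑ j ∈ H, a j` and `T = ∑ j, a j`. Complementation `H ↦ Hᶜ` sends `g H` to `T - g H`,
so there are as many subsets with `g H < T/2` as with `g H > T/2`; hence, with `lt` and `le` the
numbers of subsets with `g H < T/2` and `g H ≤ T/2`, we get `lt + le = 2^n`. In the sorted list of
the `2^n` values, position `i` holds `T/2` exactly when `lt ≤ i < le`. Since `lt + le = 2 · 2^(n-1)`,
both middle positions `2^(n-1) - 1` and `2^(n-1)` lie in that range iff `lt < le`, i.e. iff some
`g S` equals `T/2`, i.e. iff `S, Sᶜ` is an equal-sum partition.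
-/

open Finset

theorem List.Pairwise.apply_getElem_iff_lt_countP {α : Type*} [Preorder α] {L : List α}
    (hL : L.Pairwise (· ≤ ·)) {p : α → Prop} [DecidablePred p]
    (hp : ∀ y z, y ≤ z → p z → p y) {i : ℕ} (hi : i < L.length) :
    p L[i] ↔ i < L.countP (p ·) := by
  induction L generalizing i with
  | nil => simp at hi
  | cons y L ih =>
    rw [List.pairwise_cons] at hL
    by_cases hy : p y
    · rcases i with _ | i
      · simp [hy]
      · simp [hy, ih hL.2 (Nat.lt_of_succ_lt_succ hi)]
    · have hL0 : ∀ z ∈ L, ¬ p z := fun z hz hz' => hy (hp y z (hL.1 z hz) hz')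
      have hcount : L.countP (p ·) = 0 := List.countP_eq_zero.mpr (by simpa using hL0)
      rcases i with _ | i
      · simp [hy, hcount]
      · simp [hy, hcount, hL0 _ (List.getElem_mem _)]

theorem List.Pairwise.getElem?_eq_some_iff {α : Type*} [LinearOrder α] {L : List α}
    (hL : L.Pairwise (· ≤ ·)) {x : α} {i : ℕ} :
    L[i]? = some x ↔ L.countP (· < x) ≤ i ∧ i < L.countP (· ≤ x) := by
  rw [List.getElem?_eq_some_iff]
  constructor
  · rintro ⟨hi, rfl⟩
    have hlt := hL.apply_getElem_iff_lt_countP (p := (· < L[i])) (fun _ _ => lt_of_le_of_lt) hi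
    have hle := hL.apply_getElem_iff_lt_countP (p := (· ≤ L[i])) (fun _ _ => le_trans) hi
    exact ⟨not_lt.mp (hlt.not.mp (lt_irrefl _)), hle.mp le_rfl⟩
  · rintro ⟨hge, hlt'⟩
    have hi : i < L.length := hlt'.trans_le List.countP_le_length
    have hlt := hL.apply_getElem_iff_lt_countP (p := (· < x)) (fun _ _ => lt_of_le_of_lt) hi
    have hle := hL.apply_getElem_iff_lt_countP (p := (· ≤ x)) (fun _ _ => le_trans) hi
    exact ⟨hi, le_antisymm (hle.mpr hlt') (not_lt.mp fun h => (hlt.mp h).not_ge hge)⟩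

theorem Finset.countP_sort_map_val {α β : Type*} [LinearOrder β] (s : Finset α) (f : α → β)
    (p : β → Prop) [DecidablePred p] :
    ((s.val.map f).sort (· ≤ ·)).countP (p ·) = #{x ∈ s | p (f x)} := by
  rw [← Multiset.coe_countP, Multiset.sort_eq, Multiset.countP_map]
  rfl

theorem Finset.exists_eq_iff_card_filter_lt_lt_card_filter_le {α β : Type*} [LinearOrder β]
    (s : Finset α) (f : α → β) (x : β) :
    (∃ a ∈ s, f a = x) ↔ #{a ∈ s | f a < x} < #{a ∈ s | f a ≤ x} := by
  constructor
  · rintro ⟨a, ha, rfl⟩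
    have hsub : {b ∈ s | f b < f a} ⊆ {b ∈ s | f b ≤ f a} :=
      monotone_filter_right s fun _ _ => le_of_lt
    exact card_lt_card ((ssubset_iff_of_subset hsub).mpr ⟨a, by simp [ha], by simp⟩)
  · intro h
    obtain ⟨a, hle, hnlt⟩ := exists_mem_notMem_of_card_lt_card h
    simp only [mem_filter, not_and, not_lt] at hle hnlt
    exact ⟨a, hle.1, le_antisymm hle.2 (hnlt hle.1)⟩

section

variable {ι K : Type*} [Fintype ι] [DecidableEq ι] [Field K] [LinearOrder K] [IsStrictOrderedRing K]

theorem sum_eq_sum_compl_iff_eq_half (w : ι → K) (S : Finset ι) :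
    ∑ j ∈ S, w j = ∑ j ∈ Sᶜ, w j ↔ ∑ j ∈ S, w j = (∑ j, w j) / 2 := by
  rw [← sum_add_sum_compl S w]
  constructor <;> intro h <;> linarith

theorem card_filter_sum_lt_half_add_card_filter_sum_le_half (w : ι → K) :
    #{H : Finset ι | ∑ j ∈ H, w j < (∑ j, w j) / 2} +
      #{H : Finset ι | ∑ j ∈ H, w j ≤ (∑ j, w j) / 2} = 2 ^ Fintype.card ι := by
  have hcompl : #{H : Finset ι | ∑ j ∈ H, w j < (∑ j, w j) / 2} =
      #{H : Finset ι | ¬ ∑ j ∈ H, w j ≤ (∑ j, w j) / 2} := by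
    refine card_nbij' compl compl ?_ ?_ (fun H _ => compl_compl H) (fun H _ => compl_compl H)
    all_goals
      intro H hH
      simp only [coe_filter, mem_univ, true_and, Set.mem_ofPred_eq, not_le] at hH ⊢
      linarith [sum_add_sum_compl H w]
  rw [hcompl, add_comm, card_filter_add_card_filter_not, card_univ, Fintype.card_finset]

end

theorem partition_iff_median_general (n : ℕ) (hn : 1 ≤ n) (a : Fin n → ℕ) :
    (∀ H : Finset (Fin n),
      ((∑ j ∈ H, (a j : ℝ)) ≤ (∑ j, (a j : ℝ)) / 2 ∧
        (∑ j, (a j : ℝ)) / 2 ≤ ∑ j ∈ Hᶜ, (a j : ℝ)) ∨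
      ((∑ j ∈ Hᶜ, (a j : ℝ)) ≤ (∑ j, (a j : ℝ)) / 2 ∧
        (∑ j, (a j : ℝ)) / 2 ≤ ∑ j ∈ H, (a j : ℝ)))
    ∧
    (∀ H : Finset (Fin n),
      (∑ j ∈ H, (a j : ℝ)) + ∑ j ∈ Hᶜ, (a j : ℝ) = ∑ j, (a j : ℝ))
    ∧
    ((∃ S : Finset (Fin n), ∑ j ∈ S, a j = ∑ j ∈ Sᶜ, a j) ↔
      ((((Finset.univ : Finset (Finset (Fin n))).val.map
            (fun H => ∑ j ∈ H, (a j : ℝ))).sort (· ≤ ·))[2 ^ (n - 1) - 1]?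
          = some ((∑ j, (a j : ℝ)) / 2) ∧
        (((Finset.univ : Finset (Finset (Fin n))).val.map
            (fun H => ∑ j ∈ H, (a j : ℝ))).sort (· ≤ ·))[2 ^ (n - 1)]?
          = some ((∑ j, (a j : ℝ)) / 2))) := by
  have hsum (H : Finset (Fin n)) := sum_add_sum_compl H fun j => (a j : ℝ)
  refine ⟨fun H => ?_, hsum, ?_⟩
  · rcases le_total (∑ j ∈ H, (a j : ℝ)) ((∑ j, (a j : ℝ)) / 2) with h | h
    · exact Or.inl ⟨h, by linarith [hsum H]⟩
    · exact Or.inr ⟨by linarith [hsum H], h⟩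
  have hcard := card_filter_sum_lt_half_add_card_filter_sum_le_half fun j => (a j : ℝ)
  have hpow : 2 ^ n = 2 * 2 ^ (n - 1) := by rw [← pow_succ']; congr; omega
  rw [Fintype.card_fin] at hcard
  simp only [(Multiset.pairwise_sort _ _).getElem?_eq_some_iff, countP_sort_map_val]
  have hpart (S : Finset (Fin n)) :
      ∑ j ∈ S, a j = ∑ j ∈ Sᶜ, a j ↔ ∑ j ∈ S, (a j : ℝ) = (∑ j, (a j : ℝ)) / 2 := by
    rw [← sum_eq_sum_compl_iff_eq_half]; exact_mod_cast Iff.rfl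
  have hhalf := exists_eq_iff_card_filter_lt_lt_card_filter_le univ
    (fun H : Finset (Fin n) => ∑ j ∈ H, (a j : ℝ)) ((∑ j, (a j : ℝ)) / 2)
  simp only [mem_univ, true_and] at hhalf
  simp only [hpart, hhalf]
  omega

theorem partition_iff_median (n : ℕ) (hn : 1 ≤ n) (a : Fin n → ℕ) (ha : ∀ j, 0 < a j) :
    (∀ H : Finset (Fin n),
      ((∑ j ∈ H, (a j : ℝ)) ≤ (∑ j, (a j : ℝ)) / 2 ∧
        (∑ j, (a j : ℝ)) / 2 ≤ ∑ j ∈ Hᶜ, (a j : ℝ)) ∨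
      ((∑ j ∈ Hᶜ, (a j : ℝ)) ≤ (∑ j, (a j : ℝ)) / 2 ∧
        (∑ j, (a j : ℝ)) / 2 ≤ ∑ j ∈ H, (a j : ℝ)))
    ∧
    (∀ H : Finset (Fin n),
      (∑ j ∈ H, (a j : ℝ)) + ∑ j ∈ Hᶜ, (a j : ℝ) = ∑ j, (a j : ℝ))
    ∧
    ((∃ S : Finset (Fin n), ∑ j ∈ S, a j = ∑ j ∈ Sᶜ, a j) ↔
      ((((Finset.univ : Finset (Finset (Fin n))).val.map
            (fun H => ∑ j ∈ H, (a j : ℝ))).sort (· ≤ ·))[2 ^ (n - 1) - 1]?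
          = some ((∑ j, (a j : ℝ)) / 2) ∧
        (((Finset.univ : Finset (Finset (Fin n))).val.map
            (fun H => ∑ j ∈ H, (a j : ℝ))).sort (· ≤ ·))[2 ^ (n - 1)]?
          = some ((∑ j, (a j : ℝ)) / 2))) :=
  partition_iff_median_general n hn a
end

section
/- Consider the n×n matrix Q (n ≥ 6, n a multiple of 5) with q_{nn} = λ, q_{ij} = -1 if i = n or j = n but (i,j) ≠ (n,n), and q_{ij} = a = 6/n otherwise, where λ = (α-1)(n-1)·(6/n) and α = n/5; let c = d = 0. Then the solution (x⁰,y⁰) with x⁰_n = y⁰_n = 1 and all other components 0 satisfies f(x⁰,y⁰) = λ < A(Q,0,0); specifically, A(Q,0,0) - f(x⁰,y⁰) = (1/(4n))·((2/5)n² + (58/5)n - 12) > 0. -/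
open Finset

lemma sum_bv_eval {k : ℕ} (i : Fin k) :
    ∑ x : Fin k → Bool, bv x i = 2 ^ k / 2 := by
  simp only [bv]
  have hinv : Function.Involutive (fun x : Fin k → Bool => Function.update x i (!x i)) := by
    intro x
    funext j
    by_cases h : j = i
    · subst h; simp
    · simp [Function.update_of_ne h]
  set e := hinv.toPerm
  have h1 : ∑ x : Fin k → Bool, (if x i then (1:ℝ) else 0)
      = ∑ x : Fin k → Bool, (if !(x i) then (1:ℝ) else 0) := by
    rw [← Equiv.sum_comp e (fun x : Fin k → Bool => if x i then (1:ℝ) else 0)]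
    refine Finset.sum_congr rfl fun x _ => ?_
    simp [e, Function.Involutive.toPerm]
  have h2 : ∑ x : Fin k → Bool, ((if x i then (1:ℝ) else 0) + (if !(x i) then (1:ℝ) else 0))
      = 2 ^ k := by
    have : ∀ x : Fin k → Bool, ((if x i then (1:ℝ) else 0) + (if !(x i) then (1:ℝ) else 0)) = 1 := by
      intro x; cases hx : x i <;> simp [hx]
    simp only [this, Finset.sum_const, card_univ, nsmul_eq_mul, mul_one]
    simp [Fintype.card_fun]
  rw [Finset.sum_add_distrib, ← h1] at h2
  linarith

theorem large_neighborhood_local_opt_below_average (n : ℕ) (hn : 6 ≤ n) (hn5 : n % 5 = 0)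
    (lam : ℝ) (hlam : lam = (((n / 5 : ℕ) : ℝ) - 1) * ((n : ℝ) - 1) * (6 / (n : ℝ)))
    (Q : Fin n → Fin n → ℝ)
    (hQ : Q = fun i j =>
      if i.val = n - 1 ∧ j.val = n - 1 then lam
      else if i.val = n - 1 ∨ j.val = n - 1 then -1
      else 6 / (n : ℝ))
    (x0 : Fin n → Bool) (hx0 : ∀ i, x0 i = true ↔ i.val = n - 1)
    (y0 : Fin n → Bool) (hy0 : ∀ j, y0 j = true ↔ j.val = n - 1) :
    fobj n n Q (fun _ => 0) (fun _ => 0) (bv x0) (bv y0) = lam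
    ∧ avgA n n Q (fun _ => 0) (fun _ => 0)
        - fobj n n Q (fun _ => 0) (fun _ => 0) (bv x0) (bv y0)
      = (1 / (4 * (n : ℝ))) * ((2 / 5) * (n : ℝ) ^ 2 + (58 / 5) * (n : ℝ) - 12)
    ∧ fobj n n Q (fun _ => 0) (fun _ => 0) (bv x0) (bv y0)
        < avgA n n Q (fun _ => 0) (fun _ => 0) := by
  have hnR : (6:ℝ) ≤ (n:ℝ) := by exact_mod_cast hn
  have hn0 : (n:ℝ) ≠ 0 := by positivity
  set N : Fin n := ⟨n - 1, by omega⟩ with hN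
  have hval : ∀ k : Fin n, k.val = n - 1 ↔ k = N := by
    intro k
    constructor
    · intro h; exact Fin.ext h
    · intro h; subst h; rfl
  set a : ℝ := 6 / (n:ℝ) with ha
  have hQ' : Q = fun i j => if i = N ∧ j = N then lam else if i = N ∨ j = N then (-1:ℝ) else a := by
    subst hQ
    funext i j
    simp only [hval]
  -- f(x0,y0) = lam
  have hbx : bv x0 = fun i => if i = N then (1:ℝ) else 0 := by
    funext i
    by_cases h : i = N
    · subst h
      simp [bv, (hx0 N).2 ((hval N).2 rfl)]
    · have : x0 i ≠ true := fun hx => h ((hval i).1 ((hx0 i).1 hx))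
      simp only [Bool.not_eq_true] at this
      simp [bv, this, h]
  have hby : bv y0 = fun j => if j = N then (1:ℝ) else 0 := by
    funext j
    by_cases h : j = N
    · subst h
      simp [bv, (hy0 N).2 ((hval N).2 rfl)]
    · have : y0 j ≠ true := fun hy => h ((hval j).1 ((hy0 j).1 hy))
      simp only [Bool.not_eq_true] at this
      simp [bv, this, h]
  have hf : fobj n n Q (fun _ => 0) (fun _ => 0) (bv x0) (bv y0) = lam := by
    simp only [fobj, hbx, hby, mul_ite, mul_one, mul_zero, ite_mul, zero_mul,
      Finset.sum_ite_eq', Finset.mem_univ, if_true, Finset.sum_const_zero, add_zero]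
    simp [hQ']
  -- row sums
  have row : ∀ i, ∑ j, Q i j = if i = N then lam - ((n:ℝ) - 1) else ((n:ℝ) - 1) * a - 1 := by
    intro i
    by_cases hi : i = N
    · subst hi
      rw [hQ']
      simp only [true_and, true_or, if_true]
      have : ∀ j : Fin n, (if j = N then lam else (-1:ℝ)) = (if j = N then lam + 1 else 0) + (-1) := by
        intro j; by_cases h : j = N <;> simp [h]
      simp only [this, Finset.sum_add_distrib, Finset.sum_ite_eq', Finset.mem_univ, if_true,
        Finset.sum_const, card_univ, Fintype.card_fin, nsmul_eq_mul]
      ring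
    · rw [hQ']
      simp only [hi, false_and, false_or, if_false, if_neg hi]
      have : ∀ j : Fin n, (if j = N then (-1:ℝ) else a) = (if j = N then -1 - a else 0) + a := by
        intro j; by_cases h : j = N <;> simp [h]
      simp only [this, Finset.sum_add_distrib, Finset.sum_ite_eq', Finset.mem_univ, if_true,
        Finset.sum_const, card_univ, Fintype.card_fin, nsmul_eq_mul]
      ring
  have hT : ∑ i, ∑ j, Q i j = lam - 2 * ((n:ℝ) - 1) + ((n:ℝ) - 1) ^ 2 * a := by
    simp only [row]
    have : ∀ i : Fin n, (if i = N then lam - ((n:ℝ)-1) else ((n:ℝ)-1)*a - 1)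
        = (if i = N then (lam - ((n:ℝ)-1)) - (((n:ℝ)-1)*a - 1) else 0) + (((n:ℝ)-1)*a - 1) := by
      intro i; by_cases h : i = N <;> simp [h]
    simp only [this, Finset.sum_add_distrib, Finset.sum_ite_eq', Finset.mem_univ, if_true,
      Finset.sum_const, card_univ, Fintype.card_fin, nsmul_eq_mul]
    ring
  -- avgA = (∑∑ Q)/4
  have havg : avgA n n Q (fun _ => 0) (fun _ => 0) = (∑ i, ∑ j, Q i j) / 4 := by
    have hfx : ∀ x y : Fin n → Bool,
        fobj n n Q (fun _ => 0) (fun _ => 0) (bv x) (bv y)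
          = ∑ i, ∑ j, Q i j * bv x i * bv y j := by
      intro x y; simp [fobj]
    have inner1 : ∀ x : Fin n → Bool,
        ∑ y : Fin n → Bool, ∑ i, ∑ j, Q i j * bv x i * bv y j
          = ∑ i, ∑ j, Q i j * bv x i * (2^n/2) := by
      intro x
      rw [Finset.sum_comm]
      refine Finset.sum_congr rfl fun i _ => ?_
      rw [Finset.sum_comm]
      refine Finset.sum_congr rfl fun j _ => ?_
      rw [← Finset.mul_sum, sum_bv_eval j]
    have inner2 : ∑ x : Fin n → Bool, ∑ i, ∑ j, Q i j * bv x i * (2^n/2)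
        = ∑ i, ∑ j, Q i j * (2^n/2) * (2^n/2) := by
      rw [Finset.sum_comm]
      refine Finset.sum_congr rfl fun i _ => ?_
      rw [Finset.sum_comm]
      refine Finset.sum_congr rfl fun j _ => ?_
      have : ∀ x : Fin n → Bool, Q i j * bv x i * (2^n/2) = (Q i j * (2^n/2)) * bv x i := by
        intro x; ring
      simp only [this]
      rw [← Finset.mul_sum, sum_bv_eval i]
    have hfac : ∑ i, ∑ j, Q i j * (2^n/2) * ((2:ℝ)^n/2)
        = (∑ i, ∑ j, Q i j) * ((2^n/2) * (2^n/2)) := by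
      rw [Finset.sum_mul]
      refine Finset.sum_congr rfl fun i _ => ?_
      rw [Finset.sum_mul]
      refine Finset.sum_congr rfl fun j _ => ?_
      ring
    rw [avgA]
    simp only [hfx, inner1, inner2]
    rw [hfac]
    have h2 : ((2:ℝ))^n ≠ 0 := by positivity
    rw [pow_add]
    field_simp
    ring
  have h5 : (5:ℕ) ∣ n := Nat.dvd_of_mod_eq_zero hn5
  have hc : ((n / 5 : ℕ) : ℝ) = (n:ℝ) / 5 := by
    rw [Nat.cast_div h5 (by norm_num)]
    norm_num
  have heq : avgA n n Q (fun _ => 0) (fun _ => 0)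
        - fobj n n Q (fun _ => 0) (fun _ => 0) (bv x0) (bv y0)
      = (1 / (4 * (n : ℝ))) * ((2 / 5) * (n : ℝ) ^ 2 + (58 / 5) * (n : ℝ) - 12) := by
    rw [havg, hT, hf, hlam, hc, ha]
    field_simp
    ring
  refine ⟨hf, heq, ?_⟩
  have hpos : 0 < (1 / (4 * (n:ℝ))) * ((2 / 5) * (n : ℝ) ^ 2 + (58 / 5) * (n : ℝ) - 12) := by
    have h1 : (0:ℝ) < 1 / (4 * (n:ℝ)) := by positivity
    have h2 : (0:ℝ) < (2 / 5) * (n : ℝ) ^ 2 + (58 / 5) * (n : ℝ) - 12 := by nlinarith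
    exact mul_pos h1 h2
  linarith [heq, hpos]
end
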